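/- arXiv:2408.11924 — 4 statements merged into one kernel-verified Lean document; each statement's English description precedes it below -/
import Mathlib

section
/- Let α, β > 0 and define x_1 = α and x_n = β · Σ_{s=1}^{n-1} x_{n-s} x_s for n ≥ 2. Then for every n ≥ 1, x_n ≤ α · (2ζ(3/2)·αβ)^{n-1} / n^{3/2}, where ζ is the Riemann zeta function. -/
private lemma cat_rec (m : ℕ) :
    (m + 2) * catalan (m + 1) = 2 * (2 * m + 1) * catalan m := by
  have h1 := succ_mul_catalan_eq_centralBinom (m + 1)
  have h2 := Nat.succ_mul_centralBinom_succ m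
  have h3 := succ_mul_catalan_eq_centralBinom m
  have key : (m + 1) * ((m + 2) * catalan (m + 1)) =
      (m + 1) * (2 * (2 * m + 1) * catalan m) := by
    calc (m + 1) * ((m + 2) * catalan (m + 1))
        = (m + 1) * ((m + 1 + 1) * catalan (m + 1)) := by ring
      _ = (m + 1) * (m + 1).centralBinom := by rw [h1]
      _ = 2 * (2 * m + 1) * m.centralBinom := h2
      _ = 2 * (2 * m + 1) * ((m + 1) * catalan m) := by rw [h3]
      _ = (m + 1) * (2 * (2 * m + 1) * catalan m) := by ring
  exact Nat.eq_of_mul_eq_mul_left (Nat.succ_pos m) key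

private lemma rpow_three_halves_eq (x : ℝ) (hx : 0 ≤ x) :
    x ^ ((3 : ℝ) / 2) = Real.sqrt (x ^ 3) := by
  rw [show ((3 : ℝ) / 2) = (3 : ℝ) * (1 / 2) by ring, Real.rpow_mul hx,
    Real.sqrt_eq_rpow, show ((3 : ℝ)) = ((3 : ℕ) : ℝ) by norm_num,
    Real.rpow_natCast]

private lemma term_lower (m : ℕ) (q : ℝ) (hq : 0 ≤ q)
    (h : q ^ 2 * ((m : ℝ) + 1) ^ 3 ≤ 1) :
    q ≤ ((m : ℝ) + 1) ^ (-(3 / 2) : ℝ) := by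
  have hy : (0 : ℝ) ≤ (m : ℝ) + 1 := by positivity
  have hst : 0 < Real.sqrt (((m : ℝ) + 1) ^ 3) := by
    apply Real.sqrt_pos.mpr; positivity
  have heq : ((m : ℝ) + 1) ^ (-(3 / 2) : ℝ) = (Real.sqrt (((m : ℝ) + 1) ^ 3))⁻¹ := by
    rw [show (-(3 / 2) : ℝ) = -((3 : ℝ) / 2) by ring, Real.rpow_neg hy,
      rpow_three_halves_eq _ hy]
  rw [heq, ← one_div, le_div_iff₀ hst]
  have hsq : (q * Real.sqrt (((m : ℝ) + 1) ^ 3)) ^ 2 ≤ 1 := by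
    rw [mul_pow, Real.sq_sqrt (by positivity)]
    exact h
  nlinarith [mul_nonneg hq hst.le]

private lemma zeta_ge_two :
    (2 : ℝ) ≤ ∑' k : ℕ, ((k : ℝ) + 1) ^ (-(3 / 2) : ℝ) := by
  have hsum : Summable (fun k : ℕ => ((k : ℝ) + 1) ^ (-(3 / 2) : ℝ)) := by
    have h0 : Summable (fun n : ℕ => (n : ℝ) ^ (-(3 / 2) : ℝ)) :=
      Real.summable_nat_rpow.mpr (by norm_num)
    have h1 := (summable_nat_add_iff 1).mpr h0
    exact h1.congr fun n => by push_cast; ring_nf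
  have hnn : ∀ k : ℕ, 0 ≤ ((k : ℝ) + 1) ^ (-(3 / 2) : ℝ) := fun k =>
    Real.rpow_nonneg (by positivity) _
  have hpart : (2 : ℝ) ≤ ∑ k ∈ Finset.range 11, ((k : ℝ) + 1) ^ (-(3 / 2) : ℝ) := by
    have b0 : (1 : ℝ) ≤ (((0 : ℕ) : ℝ) + 1) ^ (-(3 / 2) : ℝ) :=
      term_lower 0 1 (by norm_num) (by norm_num)
    have b1 : (0.3535 : ℝ) ≤ (((1 : ℕ) : ℝ) + 1) ^ (-(3 / 2) : ℝ) :=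
      term_lower 1 0.3535 (by norm_num) (by norm_num)
    have b2 : (0.1924 : ℝ) ≤ (((2 : ℕ) : ℝ) + 1) ^ (-(3 / 2) : ℝ) :=
      term_lower 2 0.1924 (by norm_num) (by norm_num)
    have b3 : (0.125 : ℝ) ≤ (((3 : ℕ) : ℝ) + 1) ^ (-(3 / 2) : ℝ) :=
      term_lower 3 0.125 (by norm_num) (by norm_num)
    have b4 : (0.0894 : ℝ) ≤ (((4 : ℕ) : ℝ) + 1) ^ (-(3 / 2) : ℝ) :=
      term_lower 4 0.0894 (by norm_num) (by norm_num)
    have b5 : (0.068 : ℝ) ≤ (((5 : ℕ) : ℝ) + 1) ^ (-(3 / 2) : ℝ) :=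
      term_lower 5 0.068 (by norm_num) (by norm_num)
    have b6 : (0.0539 : ℝ) ≤ (((6 : ℕ) : ℝ) + 1) ^ (-(3 / 2) : ℝ) :=
      term_lower 6 0.0539 (by norm_num) (by norm_num)
    have b7 : (0.0441 : ℝ) ≤ (((7 : ℕ) : ℝ) + 1) ^ (-(3 / 2) : ℝ) :=
      term_lower 7 0.0441 (by norm_num) (by norm_num)
    have b8 : (1 / 27 : ℝ) ≤ (((8 : ℕ) : ℝ) + 1) ^ (-(3 / 2) : ℝ) :=
      term_lower 8 (1 / 27) (by norm_num) (by norm_num)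
    have b9 : (0.0316 : ℝ) ≤ (((9 : ℕ) : ℝ) + 1) ^ (-(3 / 2) : ℝ) :=
      term_lower 9 0.0316 (by norm_num) (by norm_num)
    have b10 : (0.0274 : ℝ) ≤ (((10 : ℕ) : ℝ) + 1) ^ (-(3 / 2) : ℝ) :=
      term_lower 10 0.0274 (by norm_num) (by norm_num)
    simp only [Finset.sum_range_succ, Finset.sum_range_zero]
    push_cast
    push_cast at b0 b1 b2 b3 b4 b5 b6 b7 b8 b9 b10
    linarith
  exact hpart.trans (Summable.sum_le_tsum _ (fun i _ => hnn i) hsum)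

private lemma catB (ζ : ℝ) (hζ : 2 ≤ ζ) :
    ∀ m : ℕ, (catalan m : ℝ) * Real.sqrt (((m : ℝ) + 1) ^ 3) ≤ (2 * ζ) ^ m := by
  intro m
  induction m with
  | zero => simp
  | succ m ih =>
    have hm : (0 : ℝ) ≤ (m : ℝ) := Nat.cast_nonneg m
    have hrec : ((m : ℝ) + 2) * (catalan (m + 1) : ℝ) =
        2 * (2 * (m : ℝ) + 1) * (catalan m : ℝ) := by
      exact_mod_cast congrArg (Nat.cast : ℕ → ℝ) (cat_rec m)
    have hc : (0 : ℝ) ≤ (catalan m : ℝ) := Nat.cast_nonneg _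
    have hc' : (0 : ℝ) ≤ (catalan (m + 1) : ℝ) := Nat.cast_nonneg _
    have hs2 : (0 : ℝ) ≤ Real.sqrt (((m : ℝ) + 2) ^ 3) := Real.sqrt_nonneg _
    have hs1 : (0 : ℝ) ≤ Real.sqrt (((m : ℝ) + 1) ^ 3) := Real.sqrt_nonneg _
    have key : (catalan (m + 1) : ℝ) * Real.sqrt (((m : ℝ) + 2) ^ 3) ≤
        4 * ((catalan m : ℝ) * Real.sqrt (((m : ℝ) + 1) ^ 3)) := by
      have hA : (0 : ℝ) ≤ (catalan (m + 1) : ℝ) * Real.sqrt (((m : ℝ) + 2) ^ 3) :=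
        mul_nonneg hc' hs2
      have hB : (0 : ℝ) ≤ 4 * ((catalan m : ℝ) * Real.sqrt (((m : ℝ) + 1) ^ 3)) := by
        positivity
      have hsq : ((catalan (m + 1) : ℝ) * Real.sqrt (((m : ℝ) + 2) ^ 3)) ^ 2 ≤
          (4 * ((catalan m : ℝ) * Real.sqrt (((m : ℝ) + 1) ^ 3))) ^ 2 := by
        rw [mul_pow, mul_pow, mul_pow, Real.sq_sqrt (by positivity),
          Real.sq_sqrt (by positivity)]
        have e : (catalan (m + 1) : ℝ) ^ 2 * ((m : ℝ) + 2) ^ 3 =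
            ((m : ℝ) + 2) * (((m : ℝ) + 2) * (catalan (m + 1) : ℝ)) ^ 2 := by ring
        rw [e, hrec]
        nlinarith [sq_nonneg (catalan m : ℝ), mul_nonneg hm (sq_nonneg (catalan m : ℝ))]
      exact (pow_le_pow_iff_left₀ hA hB two_ne_zero).mp hsq
    have hp : (0 : ℝ) ≤ (2 * ζ) ^ m := by positivity
    calc (catalan (m + 1) : ℝ) * Real.sqrt ((((m + 1 : ℕ) : ℝ) + 1) ^ 3)
        = (catalan (m + 1) : ℝ) * Real.sqrt (((m : ℝ) + 2) ^ 3) := by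
          rw [show (((m + 1 : ℕ) : ℝ) + 1) = (m : ℝ) + 2 by push_cast; ring]
      _ ≤ 4 * ((catalan m : ℝ) * Real.sqrt (((m : ℝ) + 1) ^ 3)) := key
      _ ≤ 4 * (2 * ζ) ^ m := by linarith
      _ ≤ (2 * ζ) * (2 * ζ) ^ m := mul_le_mul_of_nonneg_right (by linarith) hp
      _ = (2 * ζ) ^ (m + 1) := by rw [pow_succ]; ring

private lemma xpos (α β : ℝ) (hα : 0 < α) (hβ : 0 < β)
    (x : ℕ → ℝ) (hx1 : x 1 = α)
    (hrec : ∀ n, 2 ≤ n → x n = β * ∑ s ∈ Finset.Ico 1 n, x (n - s) * x s) :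
    ∀ n, 1 ≤ n → 0 < x n := by
  intro n
  induction n using Nat.strong_induction_on with
  | _ n ih =>
    intro hn
    rcases eq_or_lt_of_le hn with h1 | h2
    · rw [← h1, hx1]; exact hα
    · rw [hrec n h2]
      apply mul_pos hβ
      apply Finset.sum_pos
      · intro s hs
        obtain ⟨hs1, hs2⟩ := Finset.mem_Ico.mp hs
        exact mul_pos (ih (n - s) (by omega) (by omega)) (ih s hs2 hs1)
      · exact ⟨1, Finset.mem_Ico.mpr ⟨le_refl 1, h2⟩⟩

private lemma xcat (α β : ℝ) (hα : 0 < α) (hβ : 0 < β)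
    (x : ℕ → ℝ) (hx1 : x 1 = α)
    (hrec : ∀ n, 2 ≤ n → x n = β * ∑ s ∈ Finset.Ico 1 n, x (n - s) * x s) :
    ∀ n, 1 ≤ n → x n ≤ α * (α * β) ^ (n - 1) * (catalan (n - 1) : ℝ) := by
  have hpos := xpos α β hα hβ x hx1 hrec
  intro n
  induction n using Nat.strong_induction_on with
  | _ n ih =>
    intro hn
    rcases eq_or_lt_of_le hn with h1 | h2
    · rw [← h1, hx1]; simp
    · have hb : ∀ s ∈ Finset.Ico 1 n, x (n - s) * x s ≤
          (α * α * (α * β) ^ (n - 2)) * ((catalan (n - s - 1) * catalan (s - 1) : ℕ) : ℝ) := by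
        intro s hs
        obtain ⟨hs1, hs2⟩ := Finset.mem_Ico.mp hs
        have e1 := ih (n - s) (by omega) (by omega)
        have e2 := ih s hs2 hs1
        have p2 : 0 < x s := hpos s hs1
        have hbnd : 0 ≤ α * (α * β) ^ (n - s - 1) * (catalan (n - s - 1) : ℝ) := by
          positivity
        have := mul_le_mul e1 e2 p2.le hbnd
        refine this.trans_eq ?_
        have hexp : (n - s - 1) + (s - 1) = n - 2 := by omega
        rw [← hexp, pow_add]
        push_cast
        ring
      have hcat : ∑ s ∈ Finset.Ico 1 n, catalan (n - s - 1) * catalan (s - 1)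
          = catalan (n - 1) := by
        rw [Finset.sum_Ico_eq_sum_range]
        have h1 : n - 1 = (n - 2) + 1 := by omega
        rw [h1, catalan_succ, ← Finset.sum_range fun j => catalan j * catalan (n - 2 - j)]
        apply Finset.sum_congr rfl
        intro i hi
        have hi' := Finset.mem_range.mp hi
        have e1 : n - (1 + i) - 1 = (n - 2) - i := by omega
        have e2 : (1 + i) - 1 = i := by omega
        rw [e1, e2, mul_comm]
      calc x n = β * ∑ s ∈ Finset.Ico 1 n, x (n - s) * x s := hrec n h2
        _ ≤ β * ∑ s ∈ Finset.Ico 1 n,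
            (α * α * (α * β) ^ (n - 2)) * ((catalan (n - s - 1) * catalan (s - 1) : ℕ) : ℝ) :=
          mul_le_mul_of_nonneg_left (Finset.sum_le_sum hb) hβ.le
        _ = β * ((α * α * (α * β) ^ (n - 2)) *
            ((∑ s ∈ Finset.Ico 1 n, catalan (n - s - 1) * catalan (s - 1) : ℕ) : ℝ)) := by
          rw [← Finset.mul_sum]
          push_cast
          ring
        _ = α * (α * β) ^ (n - 1) * (catalan (n - 1) : ℝ) := by
          rw [hcat, show n - 1 = (n - 2) + 1 by omega, pow_succ]
          ring

/-- Upper bound on the "Cauchy square" series with the sharp constant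
`2 ζ(3/2)` and the `n^{-3/2}` decay, where `ζ(3/2) = ∑_{k ≥ 1} k^{-3/2}`. -/
theorem cauchy_square_zeta_bound (α β : ℝ) (hα : 0 < α) (hβ : 0 < β)
    (x : ℕ → ℝ) (hx1 : x 1 = α)
    (hrec : ∀ n, 2 ≤ n → x n = β * ∑ s ∈ Finset.Ico 1 n, x (n - s) * x s) :
    ∀ n, 1 ≤ n →
      x n ≤ α * (2 * (∑' k : ℕ, ((k : ℝ) + 1) ^ (-(3 / 2) : ℝ)) * α * β) ^ (n - 1)
        / (n : ℝ) ^ ((3 : ℝ) / 2) := by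
  intro n hn
  set ζ : ℝ := ∑' k : ℕ, ((k : ℝ) + 1) ^ (-(3 / 2) : ℝ) with hζdef
  have hζ2 : (2 : ℝ) ≤ ζ := zeta_ge_two
  have hA := xcat α β hα hβ x hx1 hrec n hn
  have hB := catB ζ hζ2 (n - 1)
  have hcast : ((n - 1 : ℕ) : ℝ) + 1 = (n : ℝ) := by
    rw [Nat.cast_sub hn]; push_cast; ring
  rw [hcast] at hB
  have hnpos : (0 : ℝ) < (n : ℝ) := by exact_mod_cast hn
  rw [rpow_three_halves_eq _ hnpos.le]
  have hs : 0 < Real.sqrt ((n : ℝ) ^ 3) := Real.sqrt_pos.mpr (by positivity)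
  rw [le_div_iff₀ hs]
  calc x n * Real.sqrt ((n : ℝ) ^ 3)
      ≤ (α * (α * β) ^ (n - 1) * (catalan (n - 1) : ℝ)) * Real.sqrt ((n : ℝ) ^ 3) :=
        mul_le_mul_of_nonneg_right hA hs.le
    _ = (α * (α * β) ^ (n - 1)) * ((catalan (n - 1) : ℝ) * Real.sqrt ((n : ℝ) ^ 3)) := by
        ring
    _ ≤ (α * (α * β) ^ (n - 1)) * (2 * ζ) ^ (n - 1) :=
        mul_le_mul_of_nonneg_left hB (by positivity)
    _ = α * (2 * ζ * α * β) ^ (n - 1) := by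
        rw [show 2 * ζ * α * β = (2 * ζ) * (α * β) by ring, mul_pow]
        ring
end

section
/- Let H be a bounded self-adjoint operator on a Hilbert space, φ a unit eigenvector with Hφ = Eφ, ψ a unit vector, and 𝓔 = ⟨ψ, Hψ⟩. Then |E − 𝓔| ≤ ‖H − E‖ · min_{θ ∈ [0,2π)} ‖φ − e^{iθ}ψ‖². -/
/-!
Put `A = H - E`, a self-adjoint operator that kills `φ` and satisfies `E - 𝓔 = -⟪ψ, A ψ⟫`.
For a unimodular `c`, expanding `⟪φ - c ψ, A (φ - c ψ)⟫` leaves only `|c|² ⟪ψ, A ψ⟫`, since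
`A φ = 0` and `⟪φ, A ψ⟫ = ⟪A φ, ψ⟫ = 0`. Hence `|E - 𝓔| ≤ ‖A‖ ‖φ - c ψ‖²` for every phase `c`.
-/

open scoped InnerProductSpace

section

variable {𝕜 E : Type*} [RCLike 𝕜] [NormedAddCommGroup E] [InnerProductSpace 𝕜 E]

theorem ContinuousLinearMap.norm_inner_apply_self_le (T : E →L[𝕜] E) (x : E) :
    ‖⟪x, T x⟫_𝕜‖ ≤ ‖T‖ * ‖x‖ ^ 2 :=
  calc ‖⟪x, T x⟫_𝕜‖ ≤ ‖x‖ * ‖T x‖ := norm_inner_le_norm x (T x)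
    _ ≤ ‖x‖ * (‖T‖ * ‖x‖) := by gcongr; exact T.le_opNorm x
    _ = ‖T‖ * ‖x‖ ^ 2 := by ring

theorem LinearMap.IsSymmetric.inner_map_sub_smul_of_apply_eq_zero {T : E →ₗ[𝕜] E}
    (hT : T.IsSymmetric) {φ : E} (hφ : T φ = 0) (ψ : E) {c : 𝕜} (hc : ‖c‖ = 1) :
    ⟪φ - c • ψ, T (φ - c • ψ)⟫_𝕜 = ⟪ψ, T ψ⟫_𝕜 := by
  have hφψ : ⟪φ, T ψ⟫_𝕜 = 0 := by rw [← hT, hφ, inner_zero_left]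
  have hcc : (starRingEnd 𝕜) c * c = 1 := by
    rw [RCLike.conj_mul, hc]; norm_num
  simp only [map_sub, map_smul, hφ, zero_sub, inner_sub_left, inner_neg_right,
    inner_smul_right, inner_smul_left, hφψ]
  linear_combination ⟪ψ, T ψ⟫_𝕜 * hcc

theorem ContinuousLinearMap.norm_inner_apply_self_le_of_apply_eq_zero {T : E →L[𝕜] E}
    (hT : (T : E →ₗ[𝕜] E).IsSymmetric) {φ : E} (hφ : T φ = 0) (ψ : E) {c : 𝕜} (hc : ‖c‖ = 1) :
    ‖⟪ψ, T ψ⟫_𝕜‖ ≤ ‖T‖ * ‖φ - c • ψ‖ ^ 2 :=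
  (congrArg norm (hT.inner_map_sub_smul_of_apply_eq_zero hφ ψ hc)).symm.trans_le
    (T.norm_inner_apply_self_le _)

end

theorem eigenvalue_error_quadratic_general {𝓗 : Type*} [NormedAddCommGroup 𝓗]
    [InnerProductSpace ℂ 𝓗] [CompleteSpace 𝓗]
    (H : 𝓗 →L[ℂ] 𝓗) (hH : IsSelfAdjoint H) (φ ψ : 𝓗)
    (hψ : ‖ψ‖ = 1) (E : ℝ) (heig : H φ = (E : ℂ) • φ) :
    ‖(E : ℂ) - (inner ℂ ψ (H ψ) : ℂ)‖
      ≤ ‖H - (E : ℂ) • (ContinuousLinearMap.id ℂ 𝓗)‖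
        * ⨅ θ : ℝ, ‖φ - Complex.exp (θ * Complex.I) • ψ‖ ^ 2 := by
  set A := H - (E : ℂ) • ContinuousLinearMap.id ℂ 𝓗
  have hA : IsSelfAdjoint A :=
    hH.sub (IsSelfAdjoint.smul (Complex.conj_ofReal E) (IsSelfAdjoint.one (𝓗 →L[ℂ] 𝓗)))
  have hAφ : A φ = 0 := by simp [A, heig]
  have hgap : (E : ℂ) - ⟪ψ, H ψ⟫_ℂ = -⟪ψ, A ψ⟫_ℂ := by
    simp [A, inner_self_eq_norm_sq_to_K, hψ]
  rw [Real.mul_iInf_of_nonneg (norm_nonneg A), hgap, norm_neg]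
  exact le_ciInf fun θ ↦ A.norm_inner_apply_self_le_of_apply_eq_zero hA.isSymmetric hAφ ψ
    (Complex.norm_exp_ofReal_mul_I θ)

/-- Eigenvalue error is quadratic in the eigenvector error, up to the optimal phase:
`|E − 𝓔| ≤ ‖H − E‖ · min_θ ‖φ − e^{iθ}ψ‖²`. -/
theorem eigenvalue_error_quadratic {𝓗 : Type*} [NormedAddCommGroup 𝓗]
    [InnerProductSpace ℂ 𝓗] [CompleteSpace 𝓗]
    (H : 𝓗 →L[ℂ] 𝓗) (hH : IsSelfAdjoint H) (φ ψ : 𝓗)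
    (hφ : ‖φ‖ = 1) (hψ : ‖ψ‖ = 1) (E : ℝ) (heig : H φ = (E : ℂ) • φ) :
    ‖(E : ℂ) - (inner ℂ ψ (H ψ) : ℂ)‖
      ≤ ‖H - (E : ℂ) • (ContinuousLinearMap.id ℂ 𝓗)‖
        * ⨅ θ : ℝ, ‖φ - Complex.exp (θ * Complex.I) • ψ‖ ^ 2 :=
  eigenvalue_error_quadratic_general H hH φ ψ hψ E heig
end

section
/- Let Γ and Λ be orthogonal projections of the same finite rank ν on a Hilbert space. Then ‖Λ(Γ − Λ)Λ‖₂ = (1/√2) · ‖(Γ − Λ)²‖₂, where ‖·‖₂ is the Hilbert–Schmidt norm. In particular ‖Λ(Γ−Λ)Λ‖₂ ≤ (1/√2)‖Γ−Λ‖₂². -/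
open Matrix

/-- The Hilbert–Schmidt (Frobenius) norm of a complex matrix: `‖B‖₂ = √(tr(B*B))`. -/
noncomputable def hsNorm {N : ℕ} (B : Matrix (Fin N) (Fin N) ℂ) : ℝ :=
  Real.sqrt (Matrix.trace (Bᴴ * B)).re

attribute [local instance] Matrix.frobeniusSeminormedAddCommGroup

lemma trace_re_eq {N : ℕ} (B : Matrix (Fin N) (Fin N) ℂ) :
    (Matrix.trace (Bᴴ * B)).re = ∑ j, ∑ i, ‖B i j‖^2 := by
  simp only [Matrix.trace, Matrix.diag, Matrix.mul_apply, Matrix.conjTranspose_apply]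
  rw [Complex.re_sum]
  refine Finset.sum_congr rfl fun j _ => ?_
  rw [Complex.re_sum]
  refine Finset.sum_congr rfl fun i _ => ?_
  rw [Complex.star_def, ← Complex.normSq_eq_conj_mul_self]
  rw [Complex.ofReal_re, Complex.normSq_eq_norm_sq]

lemma hsNorm_eq_frobenius {N : ℕ} (B : Matrix (Fin N) (Fin N) ℂ) : hsNorm B = ‖B‖ := by
  rw [hsNorm, trace_re_eq, Matrix.frobenius_norm_def, ← Real.sqrt_eq_rpow, Finset.sum_comm]
  norm_num [Real.rpow_two]

/-- For two orthogonal projections `Γ, Λ` of the same finite rank `ν`,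
`‖Λ(Γ−Λ)Λ‖₂ = (1/√2) ‖(Γ−Λ)²‖₂`, and in particular
`‖Λ(Γ−Λ)Λ‖₂ ≤ (1/√2) ‖Γ−Λ‖₂²`. -/
theorem proj_sandwich_hsNorm {N ν : ℕ} (Γ Λ : Matrix (Fin N) (Fin N) ℂ)
    (hΓsa : Γ.IsHermitian) (hΓ2 : Γ * Γ = Γ)
    (hΛsa : Λ.IsHermitian) (hΛ2 : Λ * Λ = Λ)
    (hΓtr : Matrix.trace Γ = (ν : ℂ)) (hΛtr : Matrix.trace Λ = (ν : ℂ)) :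
    hsNorm (Λ * (Γ - Λ) * Λ) = (1 / Real.sqrt 2) * hsNorm ((Γ - Λ) * (Γ - Λ)) ∧
    hsNorm (Λ * (Γ - Λ) * Λ) ≤ (1 / Real.sqrt 2) * hsNorm (Γ - Λ) ^ 2 := by
  have hΛΛ : ∀ X : Matrix (Fin N) (Fin N) ℂ, Λ * (Λ * X) = Λ * X := fun X => by
    rw [← mul_assoc, hΛ2]
  have hΓΓ : ∀ X : Matrix (Fin N) (Fin N) ℂ, Γ * (Γ * X) = Γ * X := fun X => by
    rw [← mul_assoc, hΓ2]
  set s : ℂ := Matrix.trace (Γ * Λ) with hs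
  set t : ℂ := Matrix.trace (Γ * (Λ * (Γ * Λ))) with ht
  -- basic trace identities
  have T1 : Matrix.trace (Λ * Γ) = s := by rw [trace_mul_comm]
  have T2 : Matrix.trace (Λ * (Γ * Λ)) = s := by
    rw [trace_mul_comm, mul_assoc, hΛ2]
  have T3 : Matrix.trace (Γ * (Λ * Γ)) = s := by
    rw [trace_mul_comm, mul_assoc, hΓ2, trace_mul_comm]
  have T4 : Matrix.trace (Λ * (Γ * (Λ * Γ))) = t := by
    rw [trace_mul_comm]
    simp only [mul_assoc]
    rfl
  have T5 : Matrix.trace (Λ * (Γ * (Λ * (Γ * Λ)))) = t := by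
    rw [trace_mul_comm]
    simp only [mul_assoc]
    rw [hΛ2]
  -- the two squared-norm traces
  have hAA : Matrix.trace ((Λ * (Γ - Λ) * Λ) * (Λ * (Γ - Λ) * Λ)) = t - 2 * s + (ν : ℂ) := by
    simp only [mul_sub, sub_mul, mul_assoc, hΛΛ, hΓΓ, hΛ2, hΓ2, trace_sub, trace_add]
    rw [T5, T2, hΛtr]; ring
  have hDD : Matrix.trace (((Γ - Λ) * (Γ - Λ)) * ((Γ - Λ) * (Γ - Λ)))
      = 2 * t - 4 * s + 2 * (ν : ℂ) := by
    simp only [mul_sub, sub_mul, mul_assoc, hΛΛ, hΓΓ, hΛ2, hΓ2, trace_sub, trace_add]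
    rw [hΓtr, hΛtr, T1, T2, T3, T4, ← hs, ← ht]; ring
  have hAH : (Λ * (Γ - Λ) * Λ)ᴴ = Λ * (Γ - Λ) * Λ := by
    simp only [conjTranspose_mul, conjTranspose_sub, hΓsa.eq, hΛsa.eq, mul_assoc]
  have hDH : ((Γ - Λ) * (Γ - Λ))ᴴ = (Γ - Λ) * (Γ - Λ) := by
    simp only [conjTranspose_mul, conjTranspose_sub, hΓsa.eq, hΛsa.eq]
  set x : ℝ := (Matrix.trace ((Λ * (Γ - Λ) * Λ)ᴴ * (Λ * (Γ - Λ) * Λ))).re with hx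
  have hx0 : 0 ≤ x := by
    rw [hx, trace_re_eq]
    positivity
  have htr2 : Matrix.trace (((Γ - Λ) * (Γ - Λ))ᴴ * ((Γ - Λ) * (Γ - Λ)))
      = 2 * Matrix.trace ((Λ * (Γ - Λ) * Λ)ᴴ * (Λ * (Γ - Λ) * Λ)) := by
    rw [hDH, hAH, hDD, hAA]; ring
  have hre2 : (Matrix.trace (((Γ - Λ) * (Γ - Λ))ᴴ * ((Γ - Λ) * (Γ - Λ)))).re = 2 * x := by
    rw [htr2, hx]
    simp [Complex.mul_re]
  have heq : hsNorm (Λ * (Γ - Λ) * Λ) = (1 / Real.sqrt 2) * hsNorm ((Γ - Λ) * (Γ - Λ)) := by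
    rw [hsNorm, hsNorm, hre2, ← hx]
    rw [show (2 : ℝ) * x = 2 * x from rfl, Real.sqrt_mul (by norm_num : (0:ℝ) ≤ 2)]
    rw [one_div, inv_mul_cancel_left₀ (by positivity : Real.sqrt 2 ≠ 0)]
  refine ⟨heq, heq.le.trans ?_⟩
  have h2 : hsNorm ((Γ - Λ) * (Γ - Λ)) ≤ hsNorm (Γ - Λ) ^ 2 := by
    rw [hsNorm_eq_frobenius, hsNorm_eq_frobenius, sq]
    exact Matrix.frobenius_norm_mul _ _
  exact mul_le_mul_of_nonneg_left h2 (by positivity)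
end

section
/- Let 𝓗 be a finite-dimensional complex Hilbert space, H⁰ a self-adjoint operator, E₁,…,E_ν eigenvalues of H⁰ with orthonormal eigenvectors φ₁,…,φ_ν, P := Σ_μ |φ_μ⟩⟨φ_μ|, and suppose the range of P equals the full eigenspace sum for these eigenvalues. For each μ let K_μ be the operator that vanishes on ran P and equals (E_μ − H⁰)^{-1} on (ran P)^⊥ (which is H⁰-invariant and where E_μ is not an eigenvalue). Define ℒB := [H⁰, B] and ℒ⁺F := −Σ_{μ=1}^ν K_μ F |φ_μ⟩⟨φ_μ|. Then for every operator F, ℒ⁺ℒF = P^⊥ F P, i.e. ℒ⁺ℒ is the orthogonal projection (for the Hilbert–Schmidt inner product) onto {B : B = P^⊥ B P}. -/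
/-- The rank-one operator `|u⟩⟨u| : x ↦ ⟨u, x⟩ • u`. -/
noncomputable def rankOneProj {𝓗 : Type*} [NormedAddCommGroup 𝓗]
    [InnerProductSpace ℂ 𝓗] (u : 𝓗) : 𝓗 →L[ℂ] 𝓗 :=
  (innerSL ℂ u).smulRight u

/-- The orthogonal projection `P = ∑_μ |φ_μ⟩⟨φ_μ|` onto the span of the family `φ`. -/
noncomputable def famProj {𝓗 : Type*} [NormedAddCommGroup 𝓗]
    [InnerProductSpace ℂ 𝓗] {ν : ℕ} (φ : Fin ν → 𝓗) : 𝓗 →L[ℂ] 𝓗 :=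
  ∑ μ : Fin ν, rankOneProj (φ μ)

/-- Let `H⁰` be self-adjoint with orthonormal eigenvectors `φ_μ`, eigenvalues `E_μ`,
`P` the projection onto their span, and `K_μ` the partial inverse of `E_μ − H⁰`
vanishing on `ran P` and inverting `E_μ − H⁰` on `(ran P)^⊥`.  With
`ℒB = [H⁰, B]` and `ℒ⁺F = −∑_μ K_μ F |φ_μ⟩⟨φ_μ|`, one has `ℒ⁺ℒF = P^⊥ F P`
for every operator `F`. -/
theorem lplus_l_eq_offdiag_proj {𝓗 : Type*} [NormedAddCommGroup 𝓗]
    [InnerProductSpace ℂ 𝓗] [FiniteDimensional ℂ 𝓗] {ν : ℕ}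
    (H0 : 𝓗 →L[ℂ] 𝓗) (hH0 : IsSelfAdjoint H0)
    (E : Fin ν → ℝ) (φ : Fin ν → 𝓗) (hφ : Orthonormal ℂ φ)
    (heig : ∀ μ, H0 (φ μ) = (E μ : ℂ) • φ μ)
    (K : Fin ν → (𝓗 →L[ℂ] 𝓗))
    (hKP : ∀ μ, K μ ∘L famProj φ = 0)
    (hPK : ∀ μ, famProj φ ∘L K μ = 0)
    (hKinv : ∀ μ, K μ ∘L ((E μ : ℂ) • (1 : 𝓗 →L[ℂ] 𝓗) - H0) = 1 - famProj φ)
    (hinvK : ∀ μ, ((E μ : ℂ) • (1 : 𝓗 →L[ℂ] 𝓗) - H0) ∘L K μ = 1 - famProj φ) :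
    ∀ F : 𝓗 →L[ℂ] 𝓗,
      -∑ μ : Fin ν, K μ ∘L (H0 ∘L F - F ∘L H0) ∘L rankOneProj (φ μ)
        = (1 - famProj φ) ∘L F ∘L famProj φ := by
  intro F
  have hR : ∀ μ, H0 ∘L rankOneProj (φ μ) = (E μ : ℂ) • rankOneProj (φ μ) := by
    intro μ
    ext x
    simp only [ContinuousLinearMap.comp_apply, ContinuousLinearMap.smul_apply, rankOneProj,
      ContinuousLinearMap.smulRight_apply, innerSL_apply_apply, map_smul, heig]
    rw [smul_comm]
  have key : ∀ μ, K μ ∘L (H0 ∘L F - F ∘L H0) ∘L rankOneProj (φ μ)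
      = -((1 - famProj φ) ∘L F ∘L rankOneProj (φ μ)) := by
    intro μ
    have h1 : K μ * ((H0 * F - F * H0) * rankOneProj (φ μ))
        = -((K μ * ((E μ : ℂ) • (1 : 𝓗 →L[ℂ] 𝓗) - H0)) * (F * rankOneProj (φ μ))) := by
      have hRm : H0 * rankOneProj (φ μ) = (E μ : ℂ) • rankOneProj (φ μ) := hR μ
      simp only [mul_sub, sub_mul, mul_assoc, mul_one, smul_mul_assoc, mul_smul_comm,
        one_mul, hRm, neg_sub]
    have h2 := hKinv μ
    simp only [ContinuousLinearMap.mul_def] at h1 h2 ⊢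
    rw [h1, h2]
  rw [Finset.sum_congr rfl (fun μ _ => key μ), ← Finset.sum_neg_distrib]
  simp only [neg_neg]
  have : (1 - famProj φ) ∘L F ∘L famProj φ
      = ∑ μ : Fin ν, (1 - famProj φ) ∘L F ∘L rankOneProj (φ μ) := by
    simp only [famProj, ← ContinuousLinearMap.mul_def]
    rw [Finset.mul_sum, Finset.mul_sum]
  rw [this]
end
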